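/- arXiv:2002.01189 — 2 statements merged into one kernel-verified Lean document; each statement's English description precedes it below -/
import Mathlib

section
/- For fixed x, the softmin converges to the min: for every φ ∈ C(X), lim_{ε→0} −ε log ∫_X exp((φ(y) − c(x,y))/ε) dμ(y) = min_{y ∈ supp(μ)} (c(x,y) − φ(y)). -/
open MeasureTheory Filter Topology
open scoped ENNReal NNReal

/-- The softmin transform `T_{μ,ε}(φ)(x) = -ε log ∫ exp((φ(y) - c(x,y))/ε) dμ(y)`. -/
noncomputable def softmin {X : Type*} [MeasurableSpace X] (μ : Measure X) (ε : ℝ)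
    (c : X → X → ℝ) (φ : X → ℝ) (x : X) : ℝ :=
  -ε * Real.log (∫ y, Real.exp ((φ y - c x y) / ε) ∂μ)

/-- The support of a measure: points all of whose neighborhoods have positive measure. -/
def msupport {X : Type*} [TopologicalSpace X] [MeasurableSpace X] (μ : Measure X) : Set X :=
  {x | ∀ U ∈ nhds x, μ U ≠ 0}

/-- The complement of the support is null (second countable space). -/
lemma msupport_compl_null {X : Type*} [MetricSpace X] [CompactSpace X]
    [MeasurableSpace X] [BorelSpace X] (μ : Measure X) :
    μ (msupport μ)ᶜ = 0 := by
  apply measure_null_of_locally_null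
  intro z hz
  simp only [msupport, Set.mem_compl_iff, Set.mem_setOf_eq, not_forall] at hz
  obtain ⟨U, hU, hU0⟩ := hz
  exact ⟨U, nhdsWithin_le_nhds hU, by simpa using hU0⟩

/-- For fixed `x`, the softmin converges to the min as `ε → 0⁺`:
`-ε log ∫ exp((φ(y) - c(x,y))/ε) dμ(y) → min_{y ∈ supp μ} (c(x,y) - φ(y))`. -/
theorem softmin_tendsto_min {X : Type*} [MetricSpace X] [CompactSpace X]
    [MeasurableSpace X] [BorelSpace X]
    (μ : Measure X) [IsProbabilityMeasure μ]
    (c : X → X → ℝ) (hc : Continuous fun p : X × X => c p.1 p.2)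
    (φ : X → ℝ) (hφ : Continuous φ) (x : X) :
    Filter.Tendsto (fun ε : ℝ => softmin μ ε c φ x)
      (nhdsWithin 0 (Set.Ioi 0))
      (nhds (sInf ((fun y => c x y - φ y) '' msupport μ))) := by
  set f : X → ℝ := fun y => c x y - φ y with hf_def
  have hf : Continuous f := by
    exact (hc.comp (Continuous.prodMk_right x)).sub hφ
  set S : Set X := msupport μ with hS_def
  have hSc : μ Sᶜ = 0 := msupport_compl_null μ
  have hSne : S.Nonempty := by
    by_contra h
    rw [Set.not_nonempty_iff_eq_empty] at h
    have : μ Sᶜ = 1 := by rw [h]; simp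
    rw [hSc] at this; exact one_ne_zero this.symm
  -- bounds for f on the compact space
  have : Nonempty X := ⟨hSne.choose⟩
  obtain ⟨yB, -, hyB⟩ := isCompact_univ.exists_isMaxOn Set.univ_nonempty hf.continuousOn
  set B : ℝ := f yB with hB_def
  have hB : ∀ y, f y ≤ B := fun y => hyB (Set.mem_univ y)
  obtain ⟨yb, -, hyb⟩ := isCompact_univ.exists_isMinOn Set.univ_nonempty hf.continuousOn
  have hbdd : BddBelow (f '' S) := ⟨f yb, by rintro _ ⟨y, -, rfl⟩; exact hyb (Set.mem_univ y)⟩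
  set m : ℝ := sInf (f '' S) with hm_def
  have hmle : ∀ y ∈ S, m ≤ f y := fun y hy => csInf_le hbdd ⟨y, hy, rfl⟩
  -- integrability
  have hint : ∀ ε : ℝ, Integrable (fun y => Real.exp ((φ y - c x y) / ε)) μ := by
    intro ε
    have : Continuous fun y => Real.exp ((φ y - c x y) / ε) :=
      (Real.continuous_exp.comp ((hφ.sub (hc.comp (Continuous.prodMk_right x))).div_const ε))
    exact integrableOn_univ.mp (this.continuousOn.integrableOn_compact isCompact_univ)
  -- integral is positive
  have hIpos : ∀ ε : ℝ, 0 < ε → 0 < ∫ y, Real.exp ((φ y - c x y) / ε) ∂μ := by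
    intro ε hε
    have h1 : Real.exp (-B / ε) ≤ ∫ y, Real.exp ((φ y - c x y) / ε) ∂μ := by
      have := integral_mono (μ := μ) (integrable_const (Real.exp (-B / ε))) (hint ε)
        (fun y => Real.exp_le_exp.mpr (div_le_div_of_nonneg_right ?_ hε.le))
      · simpa using this
      · have := hB y; simp only [hf_def] at this; linarith
    exact lt_of_lt_of_le (Real.exp_pos _) h1
  -- upper bound for integral : ∫ ≤ exp(-m/ε), via a.e. bound on S
  have hae : ∀ᵐ y ∂μ, y ∈ S := by
    rw [MeasureTheory.ae_iff]
    exact hSc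
  have hIle : ∀ ε : ℝ, 0 < ε →
      (∫ y, Real.exp ((φ y - c x y) / ε) ∂μ) ≤ Real.exp (-m / ε) := by
    intro ε hε
    have h1 : (∫ y, Real.exp ((φ y - c x y) / ε) ∂μ) ≤ ∫ _, Real.exp (-m / ε) ∂μ := by
      apply integral_mono_ae (hint ε) (integrable_const _)
      filter_upwards [hae] with y hy
      apply Real.exp_le_exp.mpr
      apply div_le_div_of_nonneg_right ?_ hε.le
      have := hmle y hy; simp only [hf_def] at this; linarith
    simpa using h1
  -- lower bound : softmin ≥ m
  have hlow : ∀ ε : ℝ, 0 < ε → m ≤ softmin μ ε c φ x := by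
    intro ε hε
    have hlog : Real.log (∫ y, Real.exp ((φ y - c x y) / ε) ∂μ) ≤ -m / ε := by
      calc Real.log (∫ y, Real.exp ((φ y - c x y) / ε) ∂μ)
          ≤ Real.log (Real.exp (-m / ε)) :=
            Real.log_le_log (hIpos ε hε) (hIle ε hε)
        _ = -m / ε := Real.log_exp _
    have hmm : -ε * (-m / ε) = m := by field_simp
    calc m = -ε * (-m / ε) := hmm.symm
      _ ≤ -ε * Real.log (∫ y, Real.exp ((φ y - c x y) / ε) ∂μ) := by
          apply mul_le_mul_of_nonpos_left hlog (by linarith)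
      _ = softmin μ ε c φ x := rfl
  rw [tendsto_order]
  constructor
  · intro a ha
    filter_upwards [self_mem_nhdsWithin] with ε hε
    exact lt_of_lt_of_le ha (hlow ε hε)
  · intro b hb
    set δ : ℝ := (b - m) / 2 with hδ_def
    have hδ : 0 < δ := by simp only [hδ_def]; linarith
    -- pick a point of the support with f close to inf
    obtain ⟨_, ⟨y0, hy0S, rfl⟩, hy0⟩ :=
      exists_lt_of_csInf_lt (hSne.image f) (by linarith : m < m + δ)
    set U : Set X := f ⁻¹' Set.Iio (m + δ) with hU_def
    have hUopen : IsOpen U := (isOpen_Iio).preimage hf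
    have hUnhds : U ∈ nhds y0 := hUopen.mem_nhds hy0
    have hUpos : μ U ≠ 0 := hy0S U hUnhds
    set p : ℝ := (μ U).toReal with hp_def
    have hppos : 0 < p := ENNReal.toReal_pos hUpos (measure_ne_top μ U)
    -- lower bound on the integral
    have hIge : ∀ ε : ℝ, 0 < ε →
        Real.exp (-(m + δ) / ε) * p ≤ ∫ y, Real.exp ((φ y - c x y) / ε) ∂μ := by
      intro ε hε
      have h1 : Real.exp (-(m + δ) / ε) * p ≤ ∫ y in U, Real.exp ((φ y - c x y) / ε) ∂μ := by
        apply setIntegral_ge_of_const_le_real (hUopen.measurableSet) (measure_ne_top μ U)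
        · intro y hy
          apply Real.exp_le_exp.mpr
          apply div_le_div_of_nonneg_right ?_ hε.le
          have hyU : f y < m + δ := hy
          simp only [hf_def] at hyU; linarith
        · exact (hint ε).integrableOn
      refine h1.trans (setIntegral_le_integral (hint ε) ?_)
      filter_upwards with y using (Real.exp_pos _).le
    -- softmin ε ≤ (m+δ) + ε (-log p)
    have hup : ∀ ε : ℝ, 0 < ε → softmin μ ε c φ x ≤ (m + δ) + ε * (-Real.log p) := by
      intro ε hε
      have hlog : Real.log p + (-(m + δ) / ε) ≤
          Real.log (∫ y, Real.exp ((φ y - c x y) / ε) ∂μ) := by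
        have h := Real.log_le_log (by positivity) (hIge ε hε)
        rwa [Real.log_mul (Real.exp_ne_zero _) (ne_of_gt hppos), Real.log_exp, add_comm] at h
      have h2 : -ε * Real.log (∫ y, Real.exp ((φ y - c x y) / ε) ∂μ) ≤
          -ε * (Real.log p + (-(m + δ) / ε)) :=
        mul_le_mul_of_nonpos_left hlog (by linarith)
      have h3 : -ε * (Real.log p + (-(m + δ) / ε)) = (m + δ) + ε * (-Real.log p) := by
        field_simp; ring
      calc softmin μ ε c φ x = -ε * Real.log (∫ y, Real.exp ((φ y - c x y) / ε) ∂μ) := rfl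
        _ ≤ (m + δ) + ε * (-Real.log p) := by rw [← h3]; exact h2
    -- ε * (-log p) → 0, so eventually < δ
    have htend : Tendsto (fun ε : ℝ => ε * (-Real.log p))
        (nhdsWithin 0 (Set.Ioi 0)) (nhds 0) := by
      have h := ((continuous_mul_right (-Real.log p)).tendsto 0).mono_left
        (nhdsWithin_le_nhds (s := Set.Ioi (0:ℝ)))
      simpa using h
    have hev : ∀ᶠ ε in nhdsWithin 0 (Set.Ioi 0), ε * (-Real.log p) < δ :=
      htend.eventually (Filter.Tendsto.eventually_lt_const hδ tendsto_id)
    filter_upwards [self_mem_nhdsWithin, hev] with ε hε hevε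
    have hu := hup ε hε
    have hbm : m + 2 * δ = b := by simp only [hδ_def]; ring
    linarith
end

section
/- Fix a probability measure ν on compact metric X and continuous cost c. The Sinkhorn divergence functionals S_ε(·,ν) Γ-converge (with respect to weak convergence of probability measures) to S_∞(·,ν) as ε → ∞, where S_∞(μ,ν) = ∫ c d(μ⊗ν) − ½∫ c d(μ⊗μ) − ½∫ c d(ν⊗ν). -/
open MeasureTheory Filter Topology
open scoped ENNReal NNReal Classical

/-- The Kullback-Leibler divergence (with value `+∞` if `μ` is not absolutely continuous
with respect to `ν`), written via the nonnegative integrand `x log x - x + 1`. -/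
noncomputable def KL {X : Type*} [MeasurableSpace X] (μ ν : Measure X) : ℝ≥0∞ :=
  if μ ≪ ν then
    ∫⁻ x, ENNReal.ofReal
      ((μ.rnDeriv ν x).toReal * Real.log (μ.rnDeriv ν x).toReal
        - (μ.rnDeriv ν x).toReal + 1) ∂ν
  else ∞

/-- `π ∈ Π(μ,ν)`: `π` is a measure on `X × X` with marginals `μ` and `ν`. -/
def IsCoupling {X : Type*} [MeasurableSpace X] (π : Measure (X × X)) (μ ν : Measure X) : Prop :=
  π.map Prod.fst = μ ∧ π.map Prod.snd = ν

/-- The entropic regularized transport functional `π ↦ ∫ c dπ + ε KL(π, μ⊗ν)`. -/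
noncomputable def regOTFunctional {X : Type*} [MeasurableSpace X]
    (c : X → X → ℝ) (ε : ℝ) (μ ν : Measure X) (π : Measure (X × X)) : ℝ≥0∞ :=
  (∫⁻ p, ENNReal.ofReal (c p.1 p.2) ∂π) + ENNReal.ofReal ε * KL π (μ.prod ν)
/-- The entropic regularized optimal transport cost
`OT_ε(μ,ν) = inf_{π ∈ Π(μ,ν)} { ∫ c dπ + ε KL(π, μ⊗ν) }`. -/
noncomputable def OTeps {X : Type*} [MeasurableSpace X]
    (c : X → X → ℝ) (ε : ℝ) (μ ν : Measure X) : ℝ≥0∞ :=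
  ⨅ π : {π : Measure (X × X) // IsCoupling π μ ν}, regOTFunctional c ε μ ν π


/-- The Sinkhorn divergence `S_ε(μ,ν) = OT_ε(μ,ν) - OT_ε(μ,μ)/2 - OT_ε(ν,ν)/2`. -/
noncomputable def Seps {X : Type*} [MeasurableSpace X]
    (c : X → X → ℝ) (ε : ℝ) (μ ν : Measure X) : ℝ :=
  (OTeps c ε μ ν).toReal - (OTeps c ε μ μ).toReal / 2 - (OTeps c ε ν ν).toReal / 2

/-- The limiting functional `S_∞(μ,ν) = ∫ c d(μ⊗ν) - ½ ∫ c d(μ⊗μ) - ½ ∫ c d(ν⊗ν)`. -/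
noncomputable def Sinfty {X : Type*} [MeasurableSpace X]
    (c : X → X → ℝ) (μ ν : Measure X) : ℝ :=
  (∫ p, c p.1 p.2 ∂(μ.prod ν)) - (∫ p, c p.1 p.2 ∂(μ.prod μ)) / 2
    - (∫ p, c p.1 p.2 ∂(ν.prod ν)) / 2

lemma key_ineq (a y : ℝ) (ha : 0 ≤ a) (hy : 0 ≤ y) :
    a * y ≤ (a * Real.log a - a + 1) + y * Real.exp y := by
  have h2 : Real.exp y - 1 ≤ y * Real.exp y := by
    have h := Real.add_one_le_exp (-y)
    have hm : Real.exp y * Real.exp (-y) = 1 := by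
      rw [← Real.exp_add]; simp
    nlinarith [Real.exp_pos y, Real.exp_pos (-y)]
  have h1 : a * y ≤ (a * Real.log a - a + 1) + (Real.exp y - 1) := by
    rcases eq_or_lt_of_le ha with rfl | ha'
    · nlinarith [Real.exp_pos y, Real.add_one_le_exp y, Real.log_zero]
    · have key : a * (y - Real.log a + 1) ≤ Real.exp y := by
        have h3 : (y - Real.log a) + 1 ≤ Real.exp (y - Real.log a) :=
          Real.add_one_le_exp _
        have h4 : a * ((y - Real.log a) + 1) ≤ a * Real.exp (y - Real.log a) := by
          exact mul_le_mul_of_nonneg_left h3 ha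
        have h5 : a * Real.exp (y - Real.log a) = Real.exp y := by
          rw [Real.exp_sub, Real.exp_log ha']
          field_simp
        linarith [h4, h5 ▸ h4]
      nlinarith
  linarith

lemma phi_nonneg (a : ℝ) (ha : 0 ≤ a) : 0 ≤ a * Real.log a - a + 1 := by
  rcases eq_or_lt_of_le ha with rfl | ha'
  · simp
  · have h := Real.one_sub_inv_le_log_of_pos ha'
    have : a * (1 - a⁻¹) ≤ a * Real.log a := mul_le_mul_of_nonneg_left h ha
    have ha0 : a ≠ 0 := ha'.ne'
    field_simp at this
    nlinarith

lemma isProbabilityMeasure_of_coupling {X : Type*} [MeasurableSpace X]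
    {π : Measure (X × X)} {μ ν : Measure X} [IsProbabilityMeasure μ]
    (h : IsCoupling π μ ν) : IsProbabilityMeasure π := by
  constructor
  have h1 : π.map Prod.fst Set.univ = 1 := by rw [h.1]; exact measure_univ
  rwa [Measure.map_apply measurable_fst MeasurableSet.univ, Set.preimage_univ] at h1

lemma lint_add_lint {X : Type*} [MeasurableSpace X] {c : X → X → ℝ}
    (hcm : Measurable fun p : X × X => c p.1 p.2) (hc0 : ∀ x y, 0 ≤ c x y)
    {M : ℝ} (hM : ∀ x y, c x y ≤ M) (m : Measure (X × X)) [IsProbabilityMeasure m] :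
    (∫⁻ p, ENNReal.ofReal (c p.1 p.2) ∂m) + (∫⁻ p, ENNReal.ofReal (M - c p.1 p.2) ∂m)
      = ENNReal.ofReal M := by
  rw [← lintegral_add_left hcm.ennreal_ofReal]
  have : ∀ p : X × X, ENNReal.ofReal (c p.1 p.2) + ENNReal.ofReal (M - c p.1 p.2)
      = ENNReal.ofReal M := by
    intro p
    rw [← ENNReal.ofReal_add (hc0 _ _) (sub_nonneg.2 (hM _ _))]
    ring_nf
  simp only [this, lintegral_const, measure_univ, mul_one]

lemma lint_le_of_le {X : Type*} [MeasurableSpace X] {g : X × X → ℝ} {M : ℝ}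
    (hg : ∀ p, g p ≤ M) (m : Measure (X × X)) [IsProbabilityMeasure m] :
    (∫⁻ p, ENNReal.ofReal (g p) ∂m) ≤ ENNReal.ofReal M := by
  calc (∫⁻ p, ENNReal.ofReal (g p) ∂m) ≤ ∫⁻ _, ENNReal.ofReal M ∂m :=
        lintegral_mono fun p => ENNReal.ofReal_le_ofReal (hg p)
    _ = ENNReal.ofReal M := by simp


lemma KL_self {X : Type*} [MeasurableSpace X] (m : Measure X) [SigmaFinite m] :
    KL m m = 0 := by
  rw [KL, if_pos Measure.AbsolutelyContinuous.rfl]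
  have h : (∫⁻ x, ENNReal.ofReal
      ((m.rnDeriv m x).toReal * Real.log (m.rnDeriv m x).toReal
        - (m.rnDeriv m x).toReal + 1) ∂m) = ∫⁻ _, (0 : ℝ≥0∞) ∂m :=
    lintegral_congr_ae ((Measure.rnDeriv_self m).mono fun x hx => by simp [hx])
  rw [h]; simp

lemma OTeps_le_lint {X : Type*} [MeasurableSpace X] (c : X → X → ℝ) (ε : ℝ)
    (μ ν : Measure X) [IsProbabilityMeasure μ] [IsProbabilityMeasure ν] :
    OTeps c ε μ ν ≤ ∫⁻ p, ENNReal.ofReal (c p.1 p.2) ∂(μ.prod ν) := by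
  have hcoup : IsCoupling (μ.prod ν) μ ν := by
    constructor
    · rw [Measure.map_fst_prod]; simp
    · rw [Measure.map_snd_prod]; simp
  calc OTeps c ε μ ν ≤ regOTFunctional c ε μ ν (μ.prod ν) :=
        iInf_le _ (⟨μ.prod ν, hcoup⟩ : {π : Measure (X × X) // IsCoupling π μ ν})
    _ = ∫⁻ p, ENNReal.ofReal (c p.1 p.2) ∂(μ.prod ν) := by
        rw [regOTFunctional, KL_self]; simp


lemma lint_le_OTeps_add {X : Type*} [MeasurableSpace X] {c : X → X → ℝ}
    (hcm : Measurable fun p : X × X => c p.1 p.2) (hc0 : ∀ x y, 0 ≤ c x y)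
    {M : ℝ} (hM0 : 0 ≤ M) (hM : ∀ x y, c x y ≤ M) {ε : ℝ} (hε : 0 < ε)
    (μ ν : Measure X) [IsProbabilityMeasure μ] [IsProbabilityMeasure ν] :
    (∫⁻ p, ENNReal.ofReal (c p.1 p.2) ∂(μ.prod ν)) ≤
      OTeps c ε μ ν + ENNReal.ofReal ((Real.exp (M / ε) - 1) * M) := by
  set m : Measure (X × X) := μ.prod ν with hm
  set δ : ℝ≥0∞ := ENNReal.ofReal ((Real.exp (M / ε) - 1) * M) with hδ
  rw [← tsub_le_iff_right, OTeps]
  refine le_iInf fun πs => ?_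
  rw [tsub_le_iff_right]
  obtain ⟨π, hπ⟩ := πs
  simp only [regOTFunctional]
  by_cases hac : π ≪ m
  case neg =>
    rw [KL, if_neg hac, ENNReal.mul_top (by simp [ENNReal.ofReal_eq_zero, not_le, hε])]
    simp
  haveI : IsProbabilityMeasure π := isProbabilityMeasure_of_coupling hπ
  set f : X × X → ℝ≥0∞ := π.rnDeriv m with hf
  have hfm : Measurable f := Measure.measurable_rnDeriv _ _
  have hwd : m.withDensity f = π := Measure.withDensity_rnDeriv_eq _ _ hac
  have hKL : KL π m = ∫⁻ p, ENNReal.ofReal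
      ((f p).toReal * Real.log (f p).toReal - (f p).toReal + 1) ∂m := if_pos hac
  set e : ℝ := Real.exp (M / ε) with he
  have he1 : 1 ≤ e := Real.one_le_exp (div_nonneg hM0 hε.le)
  -- pointwise a.e. bound
  have hae : ∀ᵐ p ∂m, ENNReal.ofReal (M - c p.1 p.2) * f p ≤
      ENNReal.ofReal ε * ENNReal.ofReal
        ((f p).toReal * Real.log (f p).toReal - (f p).toReal + 1)
      + ENNReal.ofReal ((M - c p.1 p.2) * e) := by
    filter_upwards [Measure.rnDeriv_lt_top π m] with p hp
    set a : ℝ := (f p).toReal with ha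
    have ha0 : 0 ≤ a := ENNReal.toReal_nonneg
    have hg0 : 0 ≤ M - c p.1 p.2 := sub_nonneg.2 (hM _ _)
    have hgM : (M - c p.1 p.2) / ε ≤ M / ε := by
      gcongr
      linarith [hc0 p.1 p.2]
    have hkey : a * (M - c p.1 p.2) ≤
        ε * (a * Real.log a - a + 1) + (M - c p.1 p.2) * e := by
      have h1 := key_ineq a ((M - c p.1 p.2) / ε) ha0 (div_nonneg hg0 hε.le)
      have h2 : Real.exp ((M - c p.1 p.2) / ε) ≤ e := Real.exp_le_exp.2 hgM
      have h3 : a * ((M - c p.1 p.2) / ε) ≤ (a * Real.log a - a + 1)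
          + ((M - c p.1 p.2) / ε) * e := by
        nlinarith [div_nonneg hg0 hε.le]
      calc a * (M - c p.1 p.2) = ε * (a * ((M - c p.1 p.2) / ε)) := by
            field_simp
        _ ≤ ε * ((a * Real.log a - a + 1) + ((M - c p.1 p.2) / ε) * e) :=
            mul_le_mul_of_nonneg_left h3 hε.le
        _ = ε * (a * Real.log a - a + 1) + (M - c p.1 p.2) * e := by
            field_simp
    have hfp : f p = ENNReal.ofReal a := (ENNReal.ofReal_toReal hp.ne).symm
    calc ENNReal.ofReal (M - c p.1 p.2) * f p
        = ENNReal.ofReal (a * (M - c p.1 p.2)) := by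
          rw [hfp, ← ENNReal.ofReal_mul hg0, mul_comm]
      _ ≤ ENNReal.ofReal (ε * (a * Real.log a - a + 1) + (M - c p.1 p.2) * e) :=
          ENNReal.ofReal_le_ofReal hkey
      _ ≤ ENNReal.ofReal (ε * (a * Real.log a - a + 1))
          + ENNReal.ofReal ((M - c p.1 p.2) * e) := ENNReal.ofReal_add_le
      _ = ENNReal.ofReal ε * ENNReal.ofReal (a * Real.log a - a + 1)
          + ENNReal.ofReal ((M - c p.1 p.2) * e) := by
          rw [ENNReal.ofReal_mul hε.le]
  -- integrate
  have hφm : Measurable fun p => ENNReal.ofReal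
      ((f p).toReal * Real.log (f p).toReal - (f p).toReal + 1) := by
    apply Measurable.ennreal_ofReal
    exact ((hfm.ennreal_toReal.mul (Real.measurable_log.comp hfm.ennreal_toReal)).sub
      hfm.ennreal_toReal).add measurable_const
  have hgm : Measurable fun p : X × X => ENNReal.ofReal (M - c p.1 p.2) :=
    (measurable_const.sub hcm).ennreal_ofReal
  have hint : (∫⁻ p, ENNReal.ofReal (M - c p.1 p.2) * f p ∂m) ≤
      ENNReal.ofReal ε * KL π m
        + ENNReal.ofReal e * ∫⁻ p, ENNReal.ofReal (M - c p.1 p.2) ∂m := by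
    calc (∫⁻ p, ENNReal.ofReal (M - c p.1 p.2) * f p ∂m)
        ≤ ∫⁻ p, (ENNReal.ofReal ε * ENNReal.ofReal
            ((f p).toReal * Real.log (f p).toReal - (f p).toReal + 1)
          + ENNReal.ofReal ((M - c p.1 p.2) * e)) ∂m := lintegral_mono_ae hae
      _ = (∫⁻ p, ENNReal.ofReal ε * ENNReal.ofReal
            ((f p).toReal * Real.log (f p).toReal - (f p).toReal + 1) ∂m)
          + ∫⁻ p, ENNReal.ofReal ((M - c p.1 p.2) * e) ∂m :=
          lintegral_add_left (hφm.const_mul _) _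
      _ = ENNReal.ofReal ε * KL π m
          + ENNReal.ofReal e * ∫⁻ p, ENNReal.ofReal (M - c p.1 p.2) ∂m := by
          rw [lintegral_const_mul _ hφm, hKL]
          congr 1
          have : ∀ p : X × X, ENNReal.ofReal ((M - c p.1 p.2) * e)
              = ENNReal.ofReal (M - c p.1 p.2) * ENNReal.ofReal e := fun p =>
            ENNReal.ofReal_mul (sub_nonneg.2 (hM _ _))
          simp only [this]
          rw [lintegral_mul_const _ hgm, mul_comm]
  set G : ℝ≥0∞ := ∫⁻ p, ENNReal.ofReal (M - c p.1 p.2) ∂m with hG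
  set Gπ : ℝ≥0∞ := ∫⁻ p, ENNReal.ofReal (M - c p.1 p.2) ∂π with hGπ
  have hGπ_eq : Gπ = ∫⁻ p, ENNReal.ofReal (M - c p.1 p.2) * f p ∂m := by
    rw [hGπ, ← hwd, lintegral_withDensity_eq_lintegral_mul _ hfm hgm]
    exact lintegral_congr fun p => mul_comm _ _
  have hG_le : G ≤ ENNReal.ofReal M :=
    lint_le_of_le (fun p => by linarith [hc0 p.1 p.2]) m
  have hGπ_le : Gπ ≤ ENNReal.ofReal M :=
    lint_le_of_le (fun p => by linarith [hc0 p.1 p.2]) π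
  have hGπ_ne : Gπ ≠ ∞ := (hGπ_le.trans_lt ENNReal.ofReal_lt_top).ne
  have hexpG : ENNReal.ofReal e * G ≤ G + δ := by
    have : ENNReal.ofReal e = 1 + ENNReal.ofReal (e - 1) := by
      rw [← ENNReal.ofReal_one, ← ENNReal.ofReal_add zero_le_one (by linarith)]
      norm_num
    rw [this, add_mul, one_mul]
    gcongr
    calc ENNReal.ofReal (e - 1) * G ≤ ENNReal.ofReal (e - 1) * ENNReal.ofReal M := by
          gcongr
      _ = δ := by rw [← ENNReal.ofReal_mul (by linarith)]
  have hsum_m := lint_add_lint hcm hc0 hM m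
  have hsum_π := lint_add_lint hcm hc0 hM π
  -- final chain
  have main : (∫⁻ p, ENNReal.ofReal (c p.1 p.2) ∂m) + Gπ ≤
      (((∫⁻ p, ENNReal.ofReal (c p.1 p.2) ∂π) + ENNReal.ofReal ε * KL π m) + δ) + Gπ := by
    calc (∫⁻ p, ENNReal.ofReal (c p.1 p.2) ∂m) + Gπ
        ≤ (∫⁻ p, ENNReal.ofReal (c p.1 p.2) ∂m)
          + (ENNReal.ofReal ε * KL π m + ENNReal.ofReal e * G) := by
          rw [hGπ_eq]; exact add_le_add (le_refl _) hint
      _ ≤ (∫⁻ p, ENNReal.ofReal (c p.1 p.2) ∂m)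
          + (ENNReal.ofReal ε * KL π m + (G + δ)) := by gcongr
      _ = ((∫⁻ p, ENNReal.ofReal (c p.1 p.2) ∂m) + G)
          + (ENNReal.ofReal ε * KL π m + δ) := by ring
      _ = ((∫⁻ p, ENNReal.ofReal (c p.1 p.2) ∂π) + Gπ)
          + (ENNReal.ofReal ε * KL π m + δ) := by rw [hsum_m, hsum_π]
      _ = (((∫⁻ p, ENNReal.ofReal (c p.1 p.2) ∂π) + ENNReal.ofReal ε * KL π m) + δ) + Gπ := by
          ring
  exact (ENNReal.add_le_add_iff_right hGπ_ne).1 main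


lemma integral_eq_toReal_lint {X : Type*} [MetricSpace X] [CompactSpace X]
    [MeasurableSpace X] [BorelSpace X] {c : X → X → ℝ} (hc : Continuous fun p : X × X => c p.1 p.2)
    (hc0 : ∀ x y, 0 ≤ c x y) (m : Measure (X × X)) :
    ∫ p, c p.1 p.2 ∂m = (∫⁻ p, ENNReal.ofReal (c p.1 p.2) ∂m).toReal := by
  exact integral_eq_lintegral_of_nonneg_ae (ae_of_all _ fun p => hc0 p.1 p.2)
    hc.aestronglyMeasurable

lemma abs_OTeps_toReal_sub {X : Type*} [MetricSpace X] [CompactSpace X]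
    [MeasurableSpace X] [BorelSpace X] {c : X → X → ℝ} (hc : Continuous fun p : X × X => c p.1 p.2)
    (hc0 : ∀ x y, 0 ≤ c x y) {M : ℝ} (hM0 : 0 ≤ M) (hM : ∀ x y, c x y ≤ M)
    {ε : ℝ} (hε : 0 < ε) (μ ν : Measure X)
    [IsProbabilityMeasure μ] [IsProbabilityMeasure ν] :
    |(OTeps c ε μ ν).toReal - ∫ p, c p.1 p.2 ∂(μ.prod ν)| ≤ (Real.exp (M / ε) - 1) * M := by
  set δ : ℝ := (Real.exp (M / ε) - 1) * M with hδ
  have hδ0 : 0 ≤ δ :=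
    mul_nonneg (by linarith [Real.one_le_exp (div_nonneg hM0 hε.le)]) hM0
  set L : ℝ≥0∞ := ∫⁻ p, ENNReal.ofReal (c p.1 p.2) ∂(μ.prod ν) with hL
  have hL_le : L ≤ ENNReal.ofReal M := lint_le_of_le (fun p => hM _ _) _
  have hL_ne : L ≠ ∞ := (hL_le.trans_lt ENNReal.ofReal_lt_top).ne
  have hub : OTeps c ε μ ν ≤ L := OTeps_le_lint c ε μ ν
  have hO_ne : OTeps c ε μ ν ≠ ∞ := (hub.trans_lt hL_ne.lt_top).ne
  have hlb : L ≤ OTeps c ε μ ν + ENNReal.ofReal δ :=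
    lint_le_OTeps_add hc.measurable hc0 hM0 hM hε μ ν
  rw [integral_eq_toReal_lint hc hc0, ← hL]
  have h1 : (OTeps c ε μ ν).toReal ≤ L.toReal := ENNReal.toReal_mono hL_ne hub
  have h2 : L.toReal ≤ (OTeps c ε μ ν).toReal + δ := by
    have := ENNReal.toReal_mono (by finiteness) hlb
    rwa [ENNReal.toReal_add hO_ne ENNReal.ofReal_ne_top, ENNReal.toReal_ofReal hδ0] at this
  rw [abs_sub_le_iff]
  constructor <;> linarith

lemma abs_Seps_sub_Sinfty {X : Type*} [MetricSpace X] [CompactSpace X]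
    [MeasurableSpace X] [BorelSpace X] {c : X → X → ℝ} (hc : Continuous fun p : X × X => c p.1 p.2)
    (hc0 : ∀ x y, 0 ≤ c x y) {M : ℝ} (hM0 : 0 ≤ M) (hM : ∀ x y, c x y ≤ M)
    {ε : ℝ} (hε : 0 < ε) (μ ν : Measure X)
    [IsProbabilityMeasure μ] [IsProbabilityMeasure ν] :
    |Seps c ε μ ν - Sinfty c μ ν| ≤ 2 * ((Real.exp (M / ε) - 1) * M) := by
  have h1 := abs_OTeps_toReal_sub hc hc0 hM0 hM hε μ ν
  have h2 := abs_OTeps_toReal_sub hc hc0 hM0 hM hε μ μ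
  have h3 := abs_OTeps_toReal_sub hc hc0 hM0 hM hε ν ν
  rw [Seps, Sinfty]
  rw [abs_sub_le_iff] at h1 h2 h3 ⊢
  constructor <;> [skip; skip] <;>
  · obtain ⟨h1a, h1b⟩ := h1; obtain ⟨h2a, h2b⟩ := h2; obtain ⟨h3a, h3b⟩ := h3
    linarith


section WeakConv

variable {X : Type*} [MetricSpace X] [CompactSpace X] [MeasurableSpace X] [BorelSpace X]
  {c : X → X → ℝ} (hc : Continuous fun p : X × X => c p.1 p.2)

include hc

lemma integrable_slice (x : X) (ρ : Measure X) [IsFiniteMeasure ρ] :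
    Integrable (fun y => c x y) ρ :=
  ((hc.comp (Continuous.prodMk_right x)).integrable_of_hasCompactSupport
    (HasCompactSupport.of_compactSpace _))

lemma cont_param_integral (ρ : Measure X) [IsFiniteMeasure ρ] :
    Continuous fun x => ∫ y, c x y ∂ρ := by
  obtain ⟨M, hM⟩ : ∃ M, ∀ p : X × X, ‖c p.1 p.2‖ ≤ M := by
    obtain ⟨M, hM⟩ := (isCompact_univ.image (hc.norm)).bddAbove
    exact ⟨M, fun p => hM ⟨p, Set.mem_univ _, rfl⟩⟩
  apply continuous_of_dominated
  · exact fun x => (hc.comp (Continuous.prodMk_right x)).aestronglyMeasurable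
  · exact fun x => ae_of_all _ fun y => hM (x, y)
  · exact integrable_const M
  · exact ae_of_all _ fun y => hc.comp (continuous_id.prodMk continuous_const)

lemma integral_prod_eq_double (ρ σ : Measure X) [IsProbabilityMeasure ρ]
    [IsProbabilityMeasure σ] :
    ∫ p, c p.1 p.2 ∂(ρ.prod σ) = ∫ x, ∫ y, c x y ∂σ ∂ρ := by
  have hint : Integrable (fun p : X × X => c p.1 p.2) (ρ.prod σ) :=
    hc.integrable_of_hasCompactSupport (HasCompactSupport.of_compactSpace _)
  exact integral_prod _ hint

lemma tendsto_double_integral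
    (μ : Measure X) [IsProbabilityMeasure μ]
    (μs : ℕ → Measure X) (hμs : ∀ n, IsProbabilityMeasure (μs n))
    (hconv : ∀ f : X → ℝ, Continuous f →
      Tendsto (fun n => ∫ x, f x ∂(μs n)) atTop (nhds (∫ x, f x ∂μ))) :
    Tendsto (fun n => ∫ x, ∫ y, c x y ∂(μs n) ∂(μs n)) atTop
      (nhds (∫ x, ∫ y, c x y ∂μ ∂μ)) := by
  haveI := hμs
  set F : X → ℝ := fun x => ∫ y, c x y ∂μ with hF
  have hFc : Continuous F := cont_param_integral hc μ
  rw [Metric.tendsto_atTop]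
  intro η hη
  set η' : ℝ := η / 5 with hη'
  have hη'0 : 0 < η' := by positivity
  -- uniform continuity of c
  obtain ⟨d, hd0, hd⟩ := Metric.uniformContinuous_iff.1
    (CompactSpace.uniformContinuous_of_continuous hc) η' hη'0
  -- finite cover
  obtain ⟨t, ht⟩ := isCompact_univ.elim_finite_subcover
    (fun z : X => Metric.ball z d) (fun z => Metric.isOpen_ball)
    (fun x _ => Set.mem_iUnion.2 ⟨x, Metric.mem_ball_self hd0⟩)
  -- eventual closeness at the centers and for F
  have hev1 : ∀ᶠ n in atTop, ∀ z ∈ t, |(∫ y, c z y ∂(μs n)) - F z| < η' := by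
    rw [t.eventually_all]
    intro z _
    have := hconv (fun y => c z y) (hc.comp (Continuous.prodMk_right z))
    have := Metric.tendsto_atTop.1 this η' hη'0
    obtain ⟨N, hN⟩ := this
    exact eventually_atTop.2 ⟨N, fun n hn => by
      simpa [Real.dist_eq] using hN n hn⟩
  have hev2 : ∀ᶠ n in atTop, |(∫ x, F x ∂(μs n)) - ∫ x, F x ∂μ| < η' := by
    have := Metric.tendsto_atTop.1 (hconv F hFc) η' hη'0
    obtain ⟨N, hN⟩ := this
    exact eventually_atTop.2 ⟨N, fun n hn => by simpa [Real.dist_eq] using hN n hn⟩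
  obtain ⟨N, hN⟩ := eventually_atTop.1 (hev1.and hev2)
  refine ⟨N, fun n hn => ?_⟩
  obtain ⟨h1, h2⟩ := hN n hn
  -- pointwise bound of |F_n - F| by 3 η'
  set Fn : X → ℝ := fun x => ∫ y, c x y ∂(μs n) with hFn
  have hFnc : Continuous Fn := cont_param_integral hc (μs n)
  have hpt : ∀ x, |Fn x - F x| ≤ 3 * η' := by
    intro x
    obtain ⟨z, hzt, hz⟩ : ∃ z ∈ t, x ∈ Metric.ball z d := by
      have := ht (Set.mem_univ x)
      simpa using this
    have hdist : ∀ y : X, |c x y - c z y| ≤ η' := by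
      intro y
      have : dist (x, y) (z, y) < d := by
        rw [Prod.dist_eq]
        simp [Metric.mem_ball, dist_comm] at hz ⊢
        exact hz
      have := hd this
      rw [Real.dist_eq] at this
      exact this.le
    have key : ∀ (ρ : Measure X), IsProbabilityMeasure ρ →
        |(∫ y, c x y ∂ρ) - ∫ y, c z y ∂ρ| ≤ η' := by
      intro ρ hρ
      haveI := hρ
      rw [← integral_sub (integrable_slice hc x ρ) (integrable_slice hc z ρ)]
      calc |∫ y, (c x y - c z y) ∂ρ| ≤ ∫ y, |c x y - c z y| ∂ρ := by
            simpa [Real.norm_eq_abs] using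
              norm_integral_le_integral_norm (fun y => c x y - c z y) (μ := ρ)
        _ ≤ ∫ _, η' ∂ρ := integral_mono
              ((integrable_slice hc x ρ).sub (integrable_slice hc z ρ)).abs
              (integrable_const _) (fun y => hdist y)
        _ = η' := by simp
    have h3 := key (μs n) (hμs n)
    have h4 := key μ inferInstance
    have h5 := h1 z hzt
    calc |Fn x - F x| = |(Fn x - Fn z) + ((Fn z - F z) + (F z - F x))| := by ring_nf
      _ ≤ |Fn x - Fn z| + |(Fn z - F z) + (F z - F x)| := abs_add_le _ _
      _ ≤ |Fn x - Fn z| + (|Fn z - F z| + |F z - F x|) :=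
          add_le_add (le_refl _) (abs_add_le _ _)
      _ ≤ η' + (η' + η') := by
          refine add_le_add ?_ (add_le_add h5.le ?_)
          · exact h3
          · rw [abs_sub_comm]; exact h4
      _ = 3 * η' := by ring
  -- conclude
  have hint1 : |(∫ x, Fn x ∂(μs n)) - ∫ x, F x ∂(μs n)| ≤ 3 * η' := by
    rw [← integral_sub
      (hFnc.integrable_of_hasCompactSupport (HasCompactSupport.of_compactSpace _))
      (hFc.integrable_of_hasCompactSupport (HasCompactSupport.of_compactSpace _))]
    calc |∫ x, (Fn x - F x) ∂(μs n)| ≤ ∫ x, |Fn x - F x| ∂(μs n) := by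
          simpa [Real.norm_eq_abs] using
            norm_integral_le_integral_norm (fun x => Fn x - F x) (μ := μs n)
      _ ≤ ∫ _, 3 * η' ∂(μs n) := integral_mono
            (((hFnc.sub hFc).integrable_of_hasCompactSupport
              (HasCompactSupport.of_compactSpace _)).abs)
            (integrable_const _) hpt
      _ = 3 * η' := by simp
  rw [Real.dist_eq]
  calc |(∫ x, Fn x ∂(μs n)) - ∫ x, F x ∂μ|
      ≤ |(∫ x, Fn x ∂(μs n)) - ∫ x, F x ∂(μs n)| + |(∫ x, F x ∂(μs n)) - ∫ x, F x ∂μ| := by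
        have := abs_add_le ((∫ x, Fn x ∂(μs n)) - ∫ x, F x ∂(μs n))
          ((∫ x, F x ∂(μs n)) - ∫ x, F x ∂μ)
        simpa using this
    _ ≤ 3 * η' + η' := add_le_add hint1 h2.le
    _ < η := by rw [hη']; linarith

end WeakConv


lemma Sinfty_tendsto {X : Type*} [MetricSpace X] [CompactSpace X] [MeasurableSpace X]
    [BorelSpace X] {c : X → X → ℝ} (hc : Continuous fun p : X × X => c p.1 p.2)
    (ν : Measure X) [IsProbabilityMeasure ν]
    (μ : Measure X) [IsProbabilityMeasure μ]
    (μs : ℕ → Measure X) (hμs : ∀ n, IsProbabilityMeasure (μs n))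
    (hconv : ∀ f : X → ℝ, Continuous f →
      Tendsto (fun n => ∫ x, f x ∂(μs n)) atTop (nhds (∫ x, f x ∂μ))) :
    Tendsto (fun n => Sinfty c (μs n) ν) atTop (nhds (Sinfty c μ ν)) := by
  haveI := hμs
  simp only [Sinfty]
  have hA : Tendsto (fun n => ∫ p, c p.1 p.2 ∂((μs n).prod ν)) atTop
      (nhds (∫ p, c p.1 p.2 ∂(μ.prod ν))) := by
    have heq : ∀ n, ∫ p, c p.1 p.2 ∂((μs n).prod ν) = ∫ x, ∫ y, c x y ∂ν ∂(μs n) :=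
      fun n => integral_prod_eq_double hc _ _
    rw [integral_prod_eq_double hc μ ν]
    simp only [heq]
    exact hconv _ (cont_param_integral hc ν)
  have hB : Tendsto (fun n => ∫ p, c p.1 p.2 ∂((μs n).prod (μs n))) atTop
      (nhds (∫ p, c p.1 p.2 ∂(μ.prod μ))) := by
    have heq : ∀ n, ∫ p, c p.1 p.2 ∂((μs n).prod (μs n)) = ∫ x, ∫ y, c x y ∂(μs n) ∂(μs n) :=
      fun n => integral_prod_eq_double hc _ _
    rw [integral_prod_eq_double hc μ μ]
    simp only [heq]
    exact tendsto_double_integral hc μ μs hμs hconv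
  exact (hA.sub (hB.div_const 2)).sub tendsto_const_nhds


/-- For fixed probability measure `ν` on a compact metric space and continuous (nonnegative)
cost `c`, the Sinkhorn divergences `S_ε(·,ν)` Γ-converge, with respect to weak convergence of
probability measures, to `S_∞(·,ν)` as `ε → ∞`: along any `ε_n → ∞`, (i) the liminf
inequality holds along every weakly convergent sequence `μ_n ⇀ μ`, and (ii) every `μ` admits
a recovery sequence. -/
theorem Seps_gamma_convergence {X : Type*} [MetricSpace X] [CompactSpace X]
    [MeasurableSpace X] [BorelSpace X]
    (c : X → X → ℝ) (hc : Continuous fun p : X × X => c p.1 p.2)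
    (hc0 : ∀ x y, 0 ≤ c x y)
    (ν : Measure X) [IsProbabilityMeasure ν]
    (ε : ℕ → ℝ) (hε : Filter.Tendsto ε Filter.atTop Filter.atTop) :
    (∀ (μ : Measure X), IsProbabilityMeasure μ →
      ∀ μs : ℕ → Measure X, (∀ n, IsProbabilityMeasure (μs n)) →
        (∀ f : X → ℝ, Continuous f →
          Filter.Tendsto (fun n => ∫ x, f x ∂(μs n)) Filter.atTop (nhds (∫ x, f x ∂μ))) →
        Sinfty c μ ν ≤ Filter.liminf (fun n => Seps c (ε n) (μs n) ν) Filter.atTop) ∧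
    (∀ (μ : Measure X), IsProbabilityMeasure μ →
      ∃ μs : ℕ → Measure X, (∀ n, IsProbabilityMeasure (μs n)) ∧
        (∀ f : X → ℝ, Continuous f →
          Filter.Tendsto (fun n => ∫ x, f x ∂(μs n)) Filter.atTop (nhds (∫ x, f x ∂μ))) ∧
        Filter.limsup (fun n => Seps c (ε n) (μs n) ν) Filter.atTop ≤ Sinfty c μ ν) := by
  
  have hXne : Nonempty X := by
    by_contra h
    rw [not_nonempty_iff] at h
    have h1 : ν Set.univ = 1 := measure_univ
    rw [Set.univ_eq_empty_iff.2 h] at h1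
    simp at h1
  obtain ⟨p0, hp0⟩ := hc.exists_forall_ge (by rw [Filter.cocompact_eq_bot]; exact tendsto_bot)
  set M : ℝ := c p0.1 p0.2 with hMdef
  have hM : ∀ x y, c x y ≤ M := fun x y => hp0 (x, y)
  have hM0 : 0 ≤ M := hc0 _ _
  set δ : ℕ → ℝ := fun n => 2 * ((Real.exp (M / ε n) - 1) * M) with hδdef
  have hδ0 : Tendsto δ atTop (nhds 0) := by
    have h1 : Tendsto (fun n => M / ε n) atTop (nhds 0) :=
      Tendsto.div_atTop tendsto_const_nhds hε
    have h2 : Tendsto (fun n => Real.exp (M / ε n)) atTop (nhds 1) := by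
      have := (Real.continuous_exp.tendsto 0).comp h1
      simpa [Function.comp_def] using this
    have h3 := ((h2.sub (tendsto_const_nhds (x := (1:ℝ)))).mul_const M).const_mul 2
    simpa using h3
  have hεpos : ∀ᶠ n in atTop, 0 < ε n := hε.eventually_gt_atTop 0
  constructor
  · -- liminf inequality
    intro μ hμ μs hμs hconv
    haveI := hμ
    have hS : Tendsto (fun n => Sinfty c (μs n) ν) atTop (nhds (Sinfty c μ ν)) :=
      Sinfty_tendsto hc ν μ μs hμs hconv
    have hev : ∀ᶠ n in atTop, Sinfty c (μs n) ν - δ n ≤ Seps c (ε n) (μs n) ν := by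
      filter_upwards [hεpos] with n hn
      haveI := hμs n
      have h := abs_Seps_sub_Sinfty hc hc0 hM0 hM hn (μs n) ν
      rw [abs_sub_le_iff] at h
      have hδn : δ n = 2 * ((Real.exp (M / ε n) - 1) * M) := rfl
      linarith [h.2, hδn]
    have hev2 : ∀ᶠ n in atTop, Seps c (ε n) (μs n) ν ≤ Sinfty c (μs n) ν + δ n := by
      filter_upwards [hεpos] with n hn
      haveI := hμs n
      have h := abs_Seps_sub_Sinfty hc hc0 hM0 hM hn (μs n) ν
      rw [abs_sub_le_iff] at h
      have hδn : δ n = 2 * ((Real.exp (M / ε n) - 1) * M) := rfl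
      linarith [h.1, hδn]
    have hlow : Tendsto (fun n => Sinfty c (μs n) ν - δ n) atTop (nhds (Sinfty c μ ν)) := by
      simpa using hS.sub hδ0
    have hup : Tendsto (fun n => Sinfty c (μs n) ν + δ n) atTop (nhds (Sinfty c μ ν)) := by
      simpa using hS.add hδ0
    have hbdd : atTop.IsCoboundedUnder (· ≥ ·) (fun n => Seps c (ε n) (μs n) ν) := by
      apply Filter.IsBoundedUnder.isCoboundedUnder_ge
      apply isBoundedUnder_of_eventually_le (a := Sinfty c μ ν + 1)
      filter_upwards [hev2, hup.eventually (eventually_lt_nhds (lt_add_one (Sinfty c μ ν)))]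
        with n h1 h2
      linarith
    calc Sinfty c μ ν = liminf (fun n => Sinfty c (μs n) ν - δ n) atTop :=
          hlow.liminf_eq.symm
      _ ≤ liminf (fun n => Seps c (ε n) (μs n) ν) atTop :=
          liminf_le_liminf hev hlow.isBoundedUnder_ge hbdd
  · -- recovery sequence
    intro μ hμ
    haveI := hμ
    refine ⟨fun _ => μ, fun _ => hμ, fun f _ => tendsto_const_nhds, ?_⟩
    have hev : ∀ᶠ n in atTop, Seps c (ε n) μ ν ≤ Sinfty c μ ν + δ n := by
      filter_upwards [hεpos] with n hn
      have h := abs_Seps_sub_Sinfty hc hc0 hM0 hM hn μ ν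
      rw [abs_sub_le_iff] at h
      have hδn : δ n = 2 * ((Real.exp (M / ε n) - 1) * M) := rfl
      linarith [h.1, hδn]
    have hev2 : ∀ᶠ n in atTop, Sinfty c μ ν - δ n ≤ Seps c (ε n) μ ν := by
      filter_upwards [hεpos] with n hn
      have h := abs_Seps_sub_Sinfty hc hc0 hM0 hM hn μ ν
      rw [abs_sub_le_iff] at h
      have hδn : δ n = 2 * ((Real.exp (M / ε n) - 1) * M) := rfl
      linarith [h.2, hδn]
    have hup : Tendsto (fun n => Sinfty c μ ν + δ n) atTop (nhds (Sinfty c μ ν)) := by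
      simpa using (tendsto_const_nhds (x := Sinfty c μ ν)).add hδ0
    have hlow : Tendsto (fun n => Sinfty c μ ν - δ n) atTop (nhds (Sinfty c μ ν)) := by
      simpa using (tendsto_const_nhds (x := Sinfty c μ ν)).sub hδ0
    have hbdd : atTop.IsCoboundedUnder (· ≤ ·) (fun n => Seps c (ε n) μ ν) := by
      apply Filter.IsBoundedUnder.isCoboundedUnder_le
      apply isBoundedUnder_of_eventually_ge (a := Sinfty c μ ν - 1)
      filter_upwards [hev2, hlow.eventually (eventually_gt_nhds
        (sub_one_lt (Sinfty c μ ν)))] with n h1 h2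
      linarith
    calc limsup (fun n => Seps c (ε n) μ ν) atTop
        ≤ limsup (fun n => Sinfty c μ ν + δ n) atTop :=
          limsup_le_limsup hev hbdd hup.isBoundedUnder_le
      _ = Sinfty c μ ν := hup.limsup_eq
end
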